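/- arXiv:1701.02127 — 3 statements merged into one kernel-verified Lean document; each statement's English description precedes it below -/
import Mathlib

section
/- Let Cxx = λ₁cos²α + λ₂sin²α, Cxy = (λ₁−λ₂)cosα sinα, Cyy = λ₁sin²α + λ₂cos²α with λ₁, λ₂ > 0. Then the inequality |Cxy| ≤ min(Cxx, Cyy) holds for all α if and only if |λ₁ − λ₂|·(|cos 2α| + |sin 2α|) ≤ λ₁ + λ₂ for all α, which holds for all α if and only if the eccentricity max(λ₁,λ₂)/min(λ₁,λ₂) ≤ 3 + 2√2. -/
open Real

lemma abs_cos_add_abs_sin_le (x : ℝ) : |cos x| + |sin x| ≤ Real.sqrt 2 := by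
  have h0 : 0 ≤ |cos x| + |sin x| := by positivity
  have hsq : (|cos x| + |sin x|) ^ 2 ≤ 2 := by
    nlinarith [sq_nonneg (|cos x| - |sin x|), sin_sq_add_cos_sq x,
      sq_abs (cos x), sq_abs (sin x)]
  calc |cos x| + |sin x| = Real.sqrt ((|cos x| + |sin x|) ^ 2) := (Real.sqrt_sq h0).symm
    _ ≤ Real.sqrt 2 := Real.sqrt_le_sqrt hsq

lemma abs_min_equiv (A d m S : ℝ) :
    (|A| * m ≤ (S + A * d) / 2 ∧ |A| * m ≤ (S - A * d) / 2) ↔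
      |A| * |d| + 2 * (|A| * m) ≤ S := by
  have habs : |A| * |d| = |A * d| := (abs_mul A d).symm
  rw [habs]
  constructor
  · rintro ⟨ha, hb⟩
    rcases abs_cases (A * d) with ⟨h, _⟩ | ⟨h, _⟩ <;> rw [h] <;> linarith
  · intro h
    rcases abs_cases (A * d) with ⟨hh, _⟩ | ⟨hh, _⟩ <;> rw [hh] at h <;>
      constructor <;> linarith

lemma pointwise_equiv (l1 l2 α : ℝ) :
    (|(l1 - l2) * cos α * sin α| ≤
        min (l1 * cos α ^ 2 + l2 * sin α ^ 2) (l1 * sin α ^ 2 + l2 * cos α ^ 2)) ↔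
      (|l1 - l2| * (|cos (2 * α)| + |sin (2 * α)|) ≤ l1 + l2) := by
  have hpyth : sin α ^ 2 + cos α ^ 2 = 1 := sin_sq_add_cos_sq α
  have e1 : l1 * cos α ^ 2 + l2 * sin α ^ 2
      = ((l1 + l2) + (l1 - l2) * (cos α ^ 2 - sin α ^ 2)) / 2 := by
    linear_combination ((l1 + l2) / 2) * hpyth
  have e2 : l1 * sin α ^ 2 + l2 * cos α ^ 2
      = ((l1 + l2) - (l1 - l2) * (cos α ^ 2 - sin α ^ 2)) / 2 := by
    linear_combination ((l1 + l2) / 2) * hpyth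
  have hcos2 : cos (2 * α) = cos α ^ 2 - sin α ^ 2 := Real.cos_two_mul' α
  have hsin2 : |sin (2 * α)| = 2 * |cos α * sin α| := by
    rw [sin_two_mul, mul_assoc, abs_mul, abs_two, mul_comm (sin α) (cos α)]
  have hlhs : |(l1 - l2) * cos α * sin α| = |l1 - l2| * |cos α * sin α| := by
    rw [mul_assoc, abs_mul]
  have hdist : |l1 - l2| * (|cos α ^ 2 - sin α ^ 2| + 2 * |cos α * sin α|)
      = |l1 - l2| * |cos α ^ 2 - sin α ^ 2| + 2 * (|l1 - l2| * |cos α * sin α|) := by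
    ring
  rw [e1, e2, hcos2, hsin2, hlhs, le_min_iff, hdist]
  exact abs_min_equiv (l1 - l2) (cos α ^ 2 - sin α ^ 2) (|cos α * sin α|) (l1 + l2)

/-- The positivity requirement `|Cxy| ≤ min (Cxx, Cyy)` for a non-negative
discretization of the 2-D affine diffusion equation, with the covariance matrix
parameterized by eigenvalues `l1, l2 > 0` and orientation `α`, holds for all
orientations `α` iff `|l1 - l2| (|cos 2α| + |sin 2α|) ≤ l1 + l2` for all `α`,
which in turn holds for all `α` iff the eccentricity
`max(l1,l2)/min(l1,l2)` is at most `3 + 2√2`. -/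
theorem positivity_condition_eccentricity_bound (l1 l2 : ℝ)
    (h1 : 0 < l1) (h2 : 0 < l2) :
    ((∀ α : ℝ, |(l1 - l2) * cos α * sin α| ≤
        min (l1 * cos α ^ 2 + l2 * sin α ^ 2) (l1 * sin α ^ 2 + l2 * cos α ^ 2)) ↔
      (∀ α : ℝ, |l1 - l2| * (|cos (2 * α)| + |sin (2 * α)|) ≤ l1 + l2)) ∧
    ((∀ α : ℝ, |l1 - l2| * (|cos (2 * α)| + |sin (2 * α)|) ≤ l1 + l2) ↔
      max l1 l2 / min l1 l2 ≤ 3 + 2 * Real.sqrt 2) := by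
  have hs2 : (0:ℝ) ≤ Real.sqrt 2 := Real.sqrt_nonneg 2
  have hs2sq : Real.sqrt 2 ^ 2 = 2 := Real.sq_sqrt (by norm_num)
  have hs2one : 1 ≤ Real.sqrt 2 := by nlinarith
  constructor
  · exact forall_congr' fun α => pointwise_equiv l1 l2 α
  · constructor
    · intro h
      have hkey := h (π / 8)
      have h4 : 2 * (π / 8) = π / 4 := by ring
      have habs2 : |Real.sqrt 2 / 2| = Real.sqrt 2 / 2 := abs_of_nonneg (by positivity)
      rw [h4, Real.cos_pi_div_four, Real.sin_pi_div_four, habs2] at hkey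
      have hss : Real.sqrt 2 / 2 + Real.sqrt 2 / 2 = Real.sqrt 2 := by ring
      rw [hss] at hkey
      -- hkey : |l1 - l2| * √2 ≤ l1 + l2
      rcases le_total l2 l1 with hle | hle
      · rw [max_eq_left hle, min_eq_right hle, div_le_iff₀ h2]
        rw [abs_of_nonneg (by linarith)] at hkey
        nlinarith [mul_le_mul_of_nonneg_left hkey (by positivity : (0:ℝ) ≤ Real.sqrt 2 + 1)]
      · rw [max_eq_right hle, min_eq_left hle, div_le_iff₀ h1]
        rw [abs_of_nonpos (by linarith)] at hkey
        nlinarith [mul_le_mul_of_nonneg_left hkey (by positivity : (0:ℝ) ≤ Real.sqrt 2 + 1)]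
    · intro h α
      have hbound : |l1 - l2| * Real.sqrt 2 ≤ l1 + l2 := by
        rcases le_total l2 l1 with hle | hle
        · rw [max_eq_left hle, min_eq_right hle, div_le_iff₀ h2] at h
          rw [abs_of_nonneg (by linarith)]
          nlinarith [mul_le_mul_of_nonneg_left h (by nlinarith : (0:ℝ) ≤ Real.sqrt 2 - 1)]
        · rw [max_eq_right hle, min_eq_left hle, div_le_iff₀ h1] at h
          rw [abs_of_nonpos (by linarith)]
          nlinarith [mul_le_mul_of_nonneg_left h (by nlinarith : (0:ℝ) ≤ Real.sqrt 2 - 1)]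
      calc |l1 - l2| * (|cos (2 * α)| + |sin (2 * α)|)
          ≤ |l1 - l2| * Real.sqrt 2 :=
            mul_le_mul_of_nonneg_left (abs_cos_add_abs_sin_le (2 * α)) (abs_nonneg _)
        _ ≤ l1 + l2 := hbound
end

section
/- Affine covariance of the affine Gaussian scale space: if f_L(ξ) = f_R(Aξ + b) for an invertible 2×2 matrix A and vector b, and L(·;Σ) = g(·;Σ) * f_L, R(·;Σ) = g(·;Σ) * f_R, then L(x; Σ_L) = R(Ax + b; A Σ_L Aᵀ) for every symmetric positive definite Σ_L. -/
open Real Matrix MeasureTheory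

/-- The two-dimensional affine Gaussian kernel with covariance matrix `S`. -/
noncomputable def affGaussKernel (S : Matrix (Fin 2) (Fin 2) ℝ) (x : Fin 2 → ℝ) : ℝ :=
  (1 / (2 * π * Real.sqrt S.det)) * Real.exp (- (x ⬝ᵥ S⁻¹.mulVec x) / 2)

/-! The substitution `η = A ξ + b` has Jacobian `|det A|`, and the Gaussian kernel is exactly
covariant under it: `A Σ Aᵀ` has the same quadratic form in `A v` as `Σ` in `v`, while its
normalisation `√det` grows by the factor `|det A|` that the Jacobian cancels. -/

theorem integral_abs_det_smul_comp_affine {ι F : Type*} [Fintype ι] [DecidableEq ι]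
    [NormedAddCommGroup F] [NormedSpace ℝ F]
    (A : Matrix ι ι ℝ) (hA : IsUnit A.det) (b : ι → ℝ) (g : (ι → ℝ) → F) :
    ∫ ξ, |A.det| • g (A *ᵥ ξ + b) = ∫ η, g η := by
  set T : (ι → ℝ) → (ι → ℝ) := fun ξ => A *ᵥ ξ + b
  set L := LinearMap.toContinuousLinearMap (Matrix.toLin' A)
  have hT_deriv : ∀ ξ ∈ Set.univ, HasFDerivWithinAt T L Set.univ ξ :=
    fun ξ _ => (L.hasFDerivAt.add_const b).hasFDerivWithinAt
  have hA' : IsUnit A := (Matrix.isUnit_iff_isUnit_det A).2 hA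
  have hT_bij : Function.Bijective T :=
    ⟨fun ξ ζ h => Matrix.mulVec_injective_iff_isUnit.2 hA' (add_right_cancel h),
     fun η => (Matrix.mulVec_surjective_iff_isUnit.2 hA' (η - b)).imp fun ξ h => by simp [T, h]⟩
  have hcov := integral_image_eq_integral_abs_det_fderiv_smul volume MeasurableSet.univ
    hT_deriv hT_bij.injective.injOn g
  rw [Set.image_univ_of_surjective hT_bij.surjective, setIntegral_univ, setIntegral_univ] at hcov
  simp [hcov, L, T, LinearMap.det_toContinuousLinearMap]

theorem dotProduct_mulVec_inv_conj {ι : Type*} [Fintype ι] [DecidableEq ι]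
    (A S : Matrix ι ι ℝ) (hA : IsUnit A.det) (v : ι → ℝ) :
    A *ᵥ v ⬝ᵥ (A * S * Aᵀ)⁻¹ *ᵥ (A *ᵥ v) = v ⬝ᵥ S⁻¹ *ᵥ v := by
  rw [Matrix.mul_inv_rev, Matrix.mul_inv_rev, ← Matrix.transpose_nonsing_inv,
    ← Matrix.mulVec_mulVec, ← Matrix.mulVec_mulVec, Matrix.dotProduct_mulVec,
    Matrix.vecMul_transpose, Matrix.mulVec_mulVec, Matrix.nonsing_inv_mul _ hA, Matrix.one_mulVec]

theorem abs_det_mul_affGaussKernel_conj_mulVec (A S : Matrix (Fin 2) (Fin 2) ℝ)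
    (hA : IsUnit A.det) (v : Fin 2 → ℝ) :
    |A.det| * affGaussKernel (A * S * Aᵀ) (A *ᵥ v) = affGaussKernel S v := by
  have hsqrt : √(A * S * Aᵀ).det = |A.det| * √S.det := by
    rw [Matrix.det_mul, Matrix.det_mul, Matrix.det_transpose, mul_right_comm, ← sq,
      Real.sqrt_mul (sq_nonneg _), Real.sqrt_sq_eq_abs]
  have hdet : |A.det| ≠ 0 := abs_ne_zero.2 hA.ne_zero
  rw [affGaussKernel, affGaussKernel, hsqrt, dotProduct_mulVec_inv_conj A S hA]
  field_simp

theorem affGauss_scale_space_affine_covariance_general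
    (A : Matrix (Fin 2) (Fin 2) ℝ) (b : Fin 2 → ℝ) (hA : IsUnit A.det)
    (fL fR : (Fin 2 → ℝ) → ℝ)
    (hrel : ∀ ξ : Fin 2 → ℝ, fL ξ = fR (A.mulVec ξ + b))
    (SL : Matrix (Fin 2) (Fin 2) ℝ) :
    ∀ x : Fin 2 → ℝ,
      ∫ ξ : Fin 2 → ℝ, affGaussKernel SL (x - ξ) * fL ξ =
        ∫ η : Fin 2 → ℝ,
          affGaussKernel (A * SL * Aᵀ) (A.mulVec x + b - η) * fR η := by
  intro x
  have hintegrand : ∀ ξ, affGaussKernel SL (x - ξ) * fL ξ =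
      |A.det| • (affGaussKernel (A * SL * Aᵀ) (A *ᵥ x + b - (A *ᵥ ξ + b)) * fR (A *ᵥ ξ + b)) := by
    intro ξ
    rw [hrel, ← abs_det_mul_affGaussKernel_conj_mulVec A SL hA, add_sub_add_right_eq_sub,
      ← Matrix.mulVec_sub, smul_eq_mul, mul_assoc]
  simp_rw [hintegrand]
  exact integral_abs_det_smul_comp_affine A hA b fun η =>
    affGaussKernel (A * SL * Aᵀ) (A *ᵥ x + b - η) * fR η

/-- Affine covariance of the affine Gaussian scale space: if
`f_L ξ = f_R (A ξ + b)` for an invertible `A`, and `L(·; Σ) = g(·; Σ) * f_L`,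
`R(·; Σ) = g(·; Σ) * f_R` are the corresponding scale-space representations,
then `L(x; Σ_L) = R(A x + b; A Σ_L Aᵀ)` for every symmetric positive
definite `Σ_L`. -/
theorem affGauss_scale_space_affine_covariance
    (A : Matrix (Fin 2) (Fin 2) ℝ) (b : Fin 2 → ℝ) (hA : IsUnit A.det)
    (fL fR : (Fin 2 → ℝ) → ℝ) (hfR : Integrable fR)
    (hrel : ∀ ξ : Fin 2 → ℝ, fL ξ = fR (A.mulVec ξ + b))
    (SL : Matrix (Fin 2) (Fin 2) ℝ) (hsymm : SL.IsSymm) (hpos : SL.PosDef) :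
    ∀ x : Fin 2 → ℝ,
      ∫ ξ : Fin 2 → ℝ, affGaussKernel SL (x - ξ) * fL ξ =
        ∫ η : Fin 2 → ℝ,
          affGaussKernel (A * SL * Aᵀ) (A.mulVec x + b - η) * fR η :=
  affGauss_scale_space_affine_covariance_general A b hA fL fR hrel SL
end

section
/- Necessity of the locality, positivity, and zero-sum conditions: if L(x; s) = Σ_ξ T(ξ; s) f(x−ξ) is a discrete pre-scale-space representation on ℤᴰ satisfying the differential equation ∂_s L(x;s) = Σ_ξ a_ξ L(x+ξ; s) that does not enhance local extrema for every input f ∈ l¹ (i.e., ∂_s L ≤ 0 at every local spatial maximum and ∂_s L ≥ 0 at every local spatial minimum), then the coefficients must satisfy: a_ξ = 0 whenever ‖ξ‖_∞ > 1; a_ξ ≥ 0 for ξ ≠ 0; and Σ_ξ a_ξ = 0. -/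
/-!
Each condition is forced by testing the extremum hypotheses at the origin on a finitely
supported signal. The unit impulse at `ξ ≠ 0` has a local minimum at `0`, and the generator
evaluates it to `a ξ`, so `a ξ ≥ 0`; when `‖ξ‖_∞ > 1` the impulse lies outside the unit cube
around `0`, so `0` is also a local maximum and `a ξ ≤ 0`. Once `a` is supported in the unit
cube, the indicator of that cube is constant near `0`, hence has both a local maximum and a
local minimum there, and the generator evaluates it to `Σ_ξ a_ξ`, which is therefore `0`.
-/

theorem Finsupp.sum_mul_pi_single_one {α : Type*} [DecidableEq α] (a : α →₀ ℝ) (ξ : α) :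
    (a.sum fun ζ c => c * (Pi.single ξ 1 : α → ℝ) ζ) = a ξ := by
  simp only [Pi.single_apply, mul_ite, mul_one, mul_zero, Finsupp.sum_ite_eq',
    Finsupp.mem_support_iff]
  exact ite_eq_left_iff.mpr fun h => (not_not.mp h).symm

theorem Finsupp.sum_mul_eq_sum_of_eq_one_on_support {α : Type*} (a : α →₀ ℝ) {f : α → ℝ}
    (hf : ∀ ξ ∈ a.support, f ξ = 1) : (a.sum fun ξ c => c * f ξ) = a.sum fun _ c => c :=
  Finsupp.sum_congr fun ξ hξ => by rw [hf ξ hξ, mul_one]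

def unitCube (ι : Type*) : Set (ι → ℤ) := {x | ∀ i, |x i| ≤ 1}

section UnitCube

variable {ι : Type*}

theorem zero_mem_unitCube : (0 : ι → ℤ) ∈ unitCube ι := fun i => by simp

theorem unitCube_finite [Finite ι] : (unitCube ι).Finite := by
  have : unitCube ι = Set.univ.pi fun _ => Set.Icc (-1) 1 := by
    ext x
    simp [unitCube, abs_le, Pi.le_def, forall_and]
  rw [this]
  exact Set.Finite.pi fun _ => Set.finite_Icc _ _

theorem summable_indicator_unitCube [Finite ι] :
    Summable ((unitCube ι).indicator fun _ => (1 : ℝ)) :=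
  summable_of_hasFiniteSupport <| unitCube_finite.subset Set.support_indicator_subset

end UnitCube

section Generator

variable {ι : Type*} (a : (ι → ℤ) →₀ ℝ)

theorem coeff_nonneg_of_nonneg_at_local_min
    (hmin : ∀ f : (ι → ℤ) → ℝ, Summable f → ∀ x₀ : ι → ℤ,
      (∀ x : ι → ℤ, (∀ i, |x i - x₀ i| ≤ 1) → f x₀ ≤ f x) →
      0 ≤ (Finsupp.sum a fun ξ c => c * f (x₀ + ξ)))
    {ξ : ι → ℤ} (hξ : ξ ≠ 0) : 0 ≤ a ξ := by
  classical
  have hloc_min : ∀ x : ι → ℤ, (∀ i, |x i - (0 : ι → ℤ) i| ≤ 1) →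
      (Pi.single ξ 1 : (ι → ℤ) → ℝ) 0 ≤ (Pi.single ξ 1 : (ι → ℤ) → ℝ) x := by
    intro x _
    rw [Pi.single_eq_of_ne (Ne.symm hξ)]
    by_cases hx : x = ξ <;> simp [hx]
  simpa only [zero_add, Finsupp.sum_mul_pi_single_one] using
    hmin _ (hasSum_pi_single ξ 1).summable 0 hloc_min

theorem coeff_nonpos_of_nonpos_at_local_max
    (hmax : ∀ f : (ι → ℤ) → ℝ, Summable f → ∀ x₀ : ι → ℤ,
      (∀ x : ι → ℤ, (∀ i, |x i - x₀ i| ≤ 1) → f x ≤ f x₀) →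
      (Finsupp.sum a fun ξ c => c * f (x₀ + ξ)) ≤ 0)
    {ξ : ι → ℤ} (hξ : ∃ i, 1 < |ξ i|) : a ξ ≤ 0 := by
  classical
  obtain ⟨i, hi⟩ := hξ
  have hξ0 : ξ ≠ 0 := by
    rintro rfl
    simp at hi
  have hloc_max : ∀ x : ι → ℤ, (∀ i, |x i - (0 : ι → ℤ) i| ≤ 1) →
      (Pi.single ξ 1 : (ι → ℤ) → ℝ) x ≤ (Pi.single ξ 1 : (ι → ℤ) → ℝ) 0 := by
    intro x hx
    have hxξ : x ≠ ξ := by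
      rintro rfl
      simpa using (hx i).trans_lt hi
    rw [Pi.single_eq_of_ne hxξ, Pi.single_eq_of_ne (Ne.symm hξ0)]
  simpa only [zero_add, Finsupp.sum_mul_pi_single_one] using
    hmax _ (hasSum_pi_single ξ 1).summable 0 hloc_max

theorem sum_coeff_eq_zero_of_support_subset_unitCube [Finite ι]
    (hmax : ∀ f : (ι → ℤ) → ℝ, Summable f → ∀ x₀ : ι → ℤ,
      (∀ x : ι → ℤ, (∀ i, |x i - x₀ i| ≤ 1) → f x ≤ f x₀) →
      (Finsupp.sum a fun ξ c => c * f (x₀ + ξ)) ≤ 0)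
    (hmin : ∀ f : (ι → ℤ) → ℝ, Summable f → ∀ x₀ : ι → ℤ,
      (∀ x : ι → ℤ, (∀ i, |x i - x₀ i| ≤ 1) → f x₀ ≤ f x) →
      0 ≤ (Finsupp.sum a fun ξ c => c * f (x₀ + ξ)))
    (ha : ∀ ξ ∈ a.support, ξ ∈ unitCube ι) : (Finsupp.sum a fun _ c => c) = 0 := by
  set χ := (unitCube ι).indicator fun _ => (1 : ℝ)
  have hχ_cube : ∀ x ∈ unitCube ι, χ x = 1 := fun x hx => Set.indicator_of_mem hx _
  have hχ_sum : (a.sum fun ξ c => c * χ (0 + ξ)) = a.sum fun _ c => c := by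
    simp only [zero_add]
    exact a.sum_mul_eq_sum_of_eq_one_on_support fun ξ hξ => hχ_cube ξ (ha ξ hξ)
  have hχ_zero : χ 0 = 1 := hχ_cube 0 zero_mem_unitCube
  have hloc_max : ∀ x : ι → ℤ, (∀ i, |x i - (0 : ι → ℤ) i| ≤ 1) → χ x ≤ χ 0 := fun x _ =>
    hχ_zero ▸ Set.indicator_le_self' (fun _ _ => zero_le_one) x
  have hloc_min : ∀ x : ι → ℤ, (∀ i, |x i - (0 : ι → ℤ) i| ≤ 1) → χ 0 ≤ χ x := fun x hx =>
    (hχ_zero.trans (hχ_cube x fun i => by simpa using hx i).symm).le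
  have hle := hmax χ summable_indicator_unitCube 0 hloc_max
  have hge := hmin χ summable_indicator_unitCube 0 hloc_min
  rw [hχ_sum] at hle hge
  exact hle.antisymm hge

end Generator

/-- Necessity of the locality, positivity and zero-sum conditions for a
discrete scale space on `ℤᴰ`: if the shift-invariant infinitesimal generator
`(𝒜 f)(x) = Σ_ξ a_ξ f(x+ξ)` satisfies non-enhancement of local extrema for
every input `f ∈ l¹` — i.e. `(𝒜 f)(x₀) ≤ 0` at every (weak) local maximum
`x₀` of `f` and `(𝒜 f)(x₀) ≥ 0` at every (weak) local minimum, where a weak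
local maximum means `f x ≤ f x₀` for all `x` with `‖x − x₀‖_∞ ≤ 1` — then
`a_ξ = 0` whenever `‖ξ‖_∞ > 1`, `a_ξ ≥ 0` for `ξ ≠ 0`, and `Σ_ξ a_ξ = 0`. -/
theorem discrete_scale_space_necessity (D : ℕ)
    (a : (Fin D → ℤ) →₀ ℝ)
    (hmax : ∀ f : (Fin D → ℤ) → ℝ, Summable f →
      ∀ x₀ : Fin D → ℤ,
        (∀ x : Fin D → ℤ, (∀ i, |x i - x₀ i| ≤ 1) → f x ≤ f x₀) →
        (Finsupp.sum a fun ξ c => c * f (x₀ + ξ)) ≤ 0)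
    (hmin : ∀ f : (Fin D → ℤ) → ℝ, Summable f →
      ∀ x₀ : Fin D → ℤ,
        (∀ x : Fin D → ℤ, (∀ i, |x i - x₀ i| ≤ 1) → f x₀ ≤ f x) →
        0 ≤ (Finsupp.sum a fun ξ c => c * f (x₀ + ξ))) :
    (∀ ξ : Fin D → ℤ, (∃ i, 1 < |ξ i|) → a ξ = 0) ∧
    (∀ ξ : Fin D → ℤ, ξ ≠ 0 → 0 ≤ a ξ) ∧
    (Finsupp.sum a fun _ c => c) = 0 := by
  have hpos : ∀ ξ : Fin D → ℤ, ξ ≠ 0 → 0 ≤ a ξ := fun ξ =>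
    coeff_nonneg_of_nonneg_at_local_min a hmin
  have hloc : ∀ ξ : Fin D → ℤ, (∃ i, 1 < |ξ i|) → a ξ = 0 := fun ξ hξ =>
    (coeff_nonpos_of_nonpos_at_local_max a hmax hξ).antisymm <|
      hpos ξ fun h => by simp [h] at hξ
  refine ⟨hloc, hpos, sum_coeff_eq_zero_of_support_subset_unitCube a hmax hmin fun ξ hξ i => ?_⟩
  by_contra! h
  exact Finsupp.mem_support_iff.mp hξ (hloc ξ ⟨i, h⟩)
end
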